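/- arXiv:1508.03810 — 9 statements merged into one kernel-verified Lean document; each statement's English description precedes it below -/
import Mathlib

section
/- A graph G is a max point-tolerance (MPT) graph if and only if its vertex set admits a linear order < such that for all vertices u < v < w < x, if uw and vx are edges, then vw is an edge. -/
open SimpleGraph Set

/-- An MPT representation: each vertex gets a pointed interval `([s v, e v], p v)`
with `p v ∈ [s v, e v]`, and distinct vertices are adjacent iff both
distinguished points lie in both intervals. -/
def IsMPTRep {V : Type*} (G : SimpleGraph V) (s p e : V → ℝ) : Prop :=
  (∀ v, s v ≤ p v ∧ p v ≤ e v) ∧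
  ∀ u v : V, u ≠ v →
    (G.Adj u v ↔ p u ∈ Set.Icc (s v) (e v) ∧ p v ∈ Set.Icc (s u) (e u))

/-- A graph is a max point-tolerance (MPT) graph if it has an MPT representation. -/
def IsMPT {V : Type*} (G : SimpleGraph V) : Prop := ∃ s p e, IsMPTRep G s p e

/-- A graph is an interval graph if it is the intersection graph of closed real intervals. -/
def IsIntervalGraph {V : Type*} (G : SimpleGraph V) : Prop :=
  ∃ s e : V → ℝ, (∀ v, s v ≤ e v) ∧
    ∀ u v : V, u ≠ v →
      (G.Adj u v ↔ (Set.Icc (s u) (e u) ∩ Set.Icc (s v) (e v)).Nonempty)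

/-! Order the vertices of an MPT representation by their points: if `u < v < w < x` and `uw`, `vx`
are edges, then `p v ≤ p w` both lie between `s w ≤ p u` and `p x ≤ e v`, so `vw` is an edge.
Conversely, given such an order on a finite vertex set, embed it into `ℝ` and give each vertex `v`
the interval spanned by `v` and its neighbours. Two vertices `u < v` then see each other's points
exactly when some `a ≤ u` is adjacent to `v` and some `b ≥ v` is adjacent to `u`, and the order
condition applied to `a ≤ u < v ≤ b` makes `u` and `v` adjacent. -/

theorem exists_linearOrder_monotone {V α : Type*} [LinearOrder α] (f : V → α) :
    ∃ lo : LinearOrder V, letI := lo; Monotone f := by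
  obtain ⟨lo, -⟩ := exists_wellFoundedLT V
  let g : V → α ×ₗ V := fun v => toLex (f v, v)
  have hg : g.Injective := fun a b hab => congrArg (fun x => (ofLex x).2) hab
  exact ⟨LinearOrder.lift' g hg, fun a b hab => Prod.Lex.monotone_fst_ofLex hab⟩

namespace SimpleGraph

variable {V : Type*} [LinearOrder V] (G : SimpleGraph V)

def IsMPTOrder : Prop :=
  ∀ u v w x : V, u < v → v < w → w < x → G.Adj u w → G.Adj v x → G.Adj v w

variable {G}

theorem _root_.IsMPTRep.isMPTOrder {s p e : V → ℝ} (h : IsMPTRep G s p e)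
    (hp : Monotone p) : G.IsMPTOrder := by
  intro u v w x huv hvw hwx huw hvx
  obtain ⟨⟨hsw, -⟩, -⟩ := (h.2 u w (huv.trans hvw).ne).1 huw
  obtain ⟨-, -, hxe⟩ := (h.2 v x (hvw.trans hwx).ne).1 hvx
  refine (h.2 v w hvw.ne).2 ⟨⟨?_, ?_⟩, ?_, ?_⟩
  · exact hsw.trans (hp huv.le)
  · exact (hp hvw.le).trans (h.1 w).2
  · exact (h.1 v).1.trans (hp hvw.le)
  · exact (hp hwx.le).trans hxe

theorem IsMPTOrder.adj_of_le (hG : G.IsMPTOrder) {a u v b : V} (hau : a ≤ u) (huv : u < v)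
    (hvb : v ≤ b) (hav : G.Adj a v) (hub : G.Adj u b) : G.Adj u v := by
  rcases hau.eq_or_lt with rfl | hau
  · exact hav
  rcases hvb.eq_or_lt with rfl | hvb
  · exact hub
  exact hG a u v b hau huv hvb hav hub

section Ends

variable (G) [Fintype V] [DecidableRel G.Adj]

def lowEnd (v : V) : V := (insert v (G.neighborFinset v)).min' (Finset.insert_nonempty _ _)

def highEnd (v : V) : V := (insert v (G.neighborFinset v)).max' (Finset.insert_nonempty _ _)

variable {G}

theorem lowEnd_le_self (v : V) : G.lowEnd v ≤ v :=
  Finset.min'_le _ _ (Finset.mem_insert_self _ _)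

theorem self_le_highEnd (v : V) : v ≤ G.highEnd v :=
  Finset.le_max' _ _ (Finset.mem_insert_self _ _)

theorem lowEnd_le_of_adj {u v : V} (h : G.Adj u v) : G.lowEnd v ≤ u :=
  Finset.min'_le _ _ (Finset.mem_insert_of_mem ((mem_neighborFinset _ _ _).2 h.symm))

theorem le_highEnd_of_adj {u v : V} (h : G.Adj u v) : v ≤ G.highEnd u :=
  Finset.le_max' _ _ (Finset.mem_insert_of_mem ((mem_neighborFinset _ _ _).2 h))

theorem adj_lowEnd_of_lowEnd_lt {v : V} (h : G.lowEnd v < v) : G.Adj (G.lowEnd v) v := by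
  rcases Finset.mem_insert.1 (Finset.min'_mem (insert v (G.neighborFinset v)) _) with hv | hv
  · exact absurd hv h.ne
  · exact ((mem_neighborFinset _ _ _).1 hv).symm

theorem adj_highEnd_of_lt_highEnd {u : V} (h : u < G.highEnd u) : G.Adj u (G.highEnd u) := by
  rcases Finset.mem_insert.1 (Finset.max'_mem (insert u (G.neighborFinset u)) _) with hu | hu
  · exact absurd hu h.ne'
  · exact (mem_neighborFinset _ _ _).1 hu

theorem IsMPTOrder.adj_iff_ends_of_lt (hG : G.IsMPTOrder) {u v : V} (huv : u < v) :
    G.Adj u v ↔ (G.lowEnd v ≤ u ∧ u ≤ G.highEnd v) ∧ (G.lowEnd u ≤ v ∧ v ≤ G.highEnd u) := by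
  have hu_high : u ≤ G.highEnd v := huv.le.trans (self_le_highEnd v)
  have hlow_v : G.lowEnd u ≤ v := (lowEnd_le_self u).trans huv.le
  refine ⟨fun h => ⟨⟨lowEnd_le_of_adj h, hu_high⟩, hlow_v, le_highEnd_of_adj h⟩, ?_⟩
  rintro ⟨⟨hlow, -⟩, -, hhigh⟩
  exact hG.adj_of_le hlow huv hhigh (adj_lowEnd_of_lowEnd_lt (hlow.trans_lt huv))
    (adj_highEnd_of_lt_highEnd (huv.trans_le hhigh))

theorem IsMPTOrder.isMPTRep (hG : G.IsMPTOrder) {p : V → ℝ} (hp : StrictMono p) :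
    IsMPTRep G (p ∘ G.lowEnd) p (p ∘ G.highEnd) := by
  refine ⟨fun v => ⟨hp.monotone (lowEnd_le_self v), hp.monotone (self_le_highEnd v)⟩,
    fun u v huv => ?_⟩
  simp only [mem_Icc, Function.comp_apply, hp.le_iff_le]
  rcases huv.lt_or_gt with h | h
  · exact hG.adj_iff_ends_of_lt h
  · rw [G.adj_comm, hG.adj_iff_ends_of_lt h, and_comm]

end Ends

end SimpleGraph

/-- A graph is MPT iff its vertex set admits a linear order `<` such that for all
`u < v < w < x`, if `uw` and `vx` are edges then `vw` is an edge. -/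
theorem mpt_iff_mptOrder {V : Type*} [Fintype V] (G : SimpleGraph V) :
    IsMPT G ↔ ∃ lo : LinearOrder V, ∀ u v w x : V,
      lo.lt u v → lo.lt v w → lo.lt w x → G.Adj u w → G.Adj v x → G.Adj v w := by
  classical
  constructor
  · rintro ⟨s, p, e, h⟩
    obtain ⟨lo, hp⟩ := exists_linearOrder_monotone p
    let := lo
    exact ⟨lo, h.isMPTOrder hp⟩
  · rintro ⟨lo, hG⟩
    let := lo
    obtain ⟨ι⟩ := Order.embedding_from_countable_to_dense (α := V) (β := ℝ)
    exact ⟨_, _, _, IsMPTOrder.isMPTRep hG ι.strictMono⟩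
end

section
/- Every interval graph is a max point-tolerance graph. -/
open SimpleGraph Set

/-! Give vertex `v` the pointed interval `([c, f (e v)], f (s v))`, where `f` is strictly monotone
and `c` lies below its range (`f = arctan`, `c = -π/2`; the compression is needed because the
`s v` may be unbounded below). With the common left end `c`, the condition `f (s u) ∈ [c, f (e v)]`
says exactly `s u ≤ e v`, and the two such conditions together say that `[s u, e u]` and
`[s v, e v]` meet. -/

theorem Set.Icc_inter_Icc_nonempty_iff {α : Type*} [LinearOrder α] {a b c d : α}
    (hab : a ≤ b) (hcd : c ≤ d) : (Icc a b ∩ Icc c d).Nonempty ↔ a ≤ d ∧ c ≤ b := by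
  rw [Icc_inter_Icc, nonempty_Icc]
  simp only [max_le_iff, le_min_iff, hab, hcd, true_and, and_comm]

theorem isMPTRep_of_intervals {V : Type*} {G : SimpleGraph V} {s e : V → ℝ}
    (hse : ∀ v, s v ≤ e v)
    (hadj : ∀ u v, u ≠ v → (G.Adj u v ↔ (Icc (s u) (e u) ∩ Icc (s v) (e v)).Nonempty))
    {f : ℝ → ℝ} (hf : StrictMono f) {c : ℝ} (hc : ∀ x, c ≤ f x) :
    IsMPTRep G (fun _ => c) (f ∘ s) (f ∘ e) := by
  refine ⟨fun v => ⟨hc _, hf.monotone (hse v)⟩, fun u v huv => ?_⟩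
  rw [hadj u v huv, Icc_inter_Icc_nonempty_iff (hse u) (hse v)]
  simp only [Function.comp_apply, mem_Icc, hc, true_and, hf.le_iff_le]

/-- Every interval graph is a max point-tolerance graph. -/
theorem intervalGraph_isMPT {V : Type*} (G : SimpleGraph V) :
    IsIntervalGraph G → IsMPT G := by
  rintro ⟨s, e, hse, hadj⟩
  exact ⟨_, _, _, isMPTRep_of_intervals hse hadj Real.arctan_strictMono
    fun x => (Real.neg_pi_div_two_lt_arctan x).le⟩
end

section
/- If a linear order σ = (v_1 < ... < v_n) on the vertex set V of a graph G = (V,E) satisfies: E = E_1 ∩ E_2 where σ is an I-order of H_1 = (V, E_1) and the reverse of σ is an I-order of H_2 = (V, E_2), then σ is an MPT-order of G. -/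
open SimpleGraph Set

/-- If `E = E₁ ∩ E₂`, the order is an I-order of `H₁` and its reverse is an
I-order of `H₂`, then the order is an MPT-order of `G`. -/
theorem mptOrder_of_two_iOrders {V : Type*} [LinearOrder V]
    (G H₁ H₂ : SimpleGraph V) (hE : G = H₁ ⊓ H₂)
    (h1 : ∀ u v w : V, u < v → v < w → H₁.Adj u w → H₁.Adj u v)
    (h2 : ∀ u v w : V, w < v → v < u → H₂.Adj u w → H₂.Adj u v) :
    ∀ u v w x : V, u < v → v < w → w < x → G.Adj u w → G.Adj v x → G.Adj v w := by
  subst hE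
  intro u v w x huv hvw hwx huw hvx
  have hvw₁ : H₁.Adj v w := h1 v w x hvw hwx hvx.1
  have hwv₂ : H₂.Adj w v := h2 w v u huv hvw huw.2.symm
  exact ⟨hvw₁, hwv₂.symm⟩
end

section
/- A graph G = (V,E) admits an MPT-order σ if and only if there exist graphs H_1 = (V,E_1) and H_2 = (V,E_2) such that E = E_1 ∩ E_2, σ is an I-order of H_1, and the reverse of σ is an I-order of H_2. -/
open SimpleGraph Set

/-!
`H₁ = iOrderClosure G` adds to `G` every edge `uv` (`u < v`) nested inside an edge `uw` with
`v ≤ w`, the least supergraph on which `<` is an I-order; dually `H₂ = revIOrderClosure G` adds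
every `uv` nested inside some `tv` with `t ≤ u`. An edge `uv` of `H₁ ⊓ H₂` thus comes with edges `tv` and `uw` of `G` such that
`t ≤ u < v ≤ w`, and the MPT condition is exactly what forces `uv ∈ G`. Conversely, from
`uw, vx ∈ H₁ ⊓ H₂` with `u < v < w < x` the I-order of `H₁` shortens `vx` to `vw`, and that of the
reverse order on `H₂` shortens `uw` to `vw`.
-/

namespace SimpleGraph

variable {V : Type*} [LinearOrder V]

theorem le_of_forall_lt_adj {G H : SimpleGraph V}
    (h : ∀ a b, a < b → G.Adj a b → H.Adj a b) : G ≤ H := by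
  intro a b hab
  rcases hab.ne.lt_or_gt with hlt | hgt
  · exact h a b hlt hab
  · exact (h b a hgt hab.symm).symm

def iOrderClosure (G : SimpleGraph V) : SimpleGraph V :=
  fromRel fun u v => u < v ∧ ∃ w, v ≤ w ∧ G.Adj u w

def revIOrderClosure (G : SimpleGraph V) : SimpleGraph V :=
  fromRel fun u v => u < v ∧ ∃ t, t ≤ u ∧ G.Adj t v

variable (G : SimpleGraph V)

theorem iOrderClosure_adj_of_lt {u v : V} (huv : u < v) :
    (iOrderClosure G).Adj u v ↔ ∃ w, v ≤ w ∧ G.Adj u w := by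
  rw [iOrderClosure, fromRel_adj]
  exact ⟨fun ⟨_, h⟩ => (h.resolve_right fun hvu => huv.not_gt hvu.1).2,
    fun h => ⟨huv.ne, .inl ⟨huv, h⟩⟩⟩

theorem revIOrderClosure_adj_of_lt {u v : V} (huv : u < v) :
    (revIOrderClosure G).Adj u v ↔ ∃ t, t ≤ u ∧ G.Adj t v := by
  rw [revIOrderClosure, fromRel_adj]
  exact ⟨fun ⟨_, h⟩ => (h.resolve_right fun hvu => huv.not_gt hvu.1).2,
    fun h => ⟨huv.ne, .inl ⟨huv, h⟩⟩⟩

theorem le_iOrderClosure : G ≤ iOrderClosure G :=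
  le_of_forall_lt_adj fun _ b hab h => (iOrderClosure_adj_of_lt G hab).2 ⟨b, le_rfl, h⟩

theorem le_revIOrderClosure : G ≤ revIOrderClosure G :=
  le_of_forall_lt_adj fun a _ hab h => (revIOrderClosure_adj_of_lt G hab).2 ⟨a, le_rfl, h⟩

theorem iOrderClosure_iOrder (u v w : V) (huv : u < v) (hvw : v < w)
    (h : (iOrderClosure G).Adj u w) : (iOrderClosure G).Adj u v := by
  obtain ⟨x, hwx, hux⟩ := (iOrderClosure_adj_of_lt G (huv.trans hvw)).1 h
  exact (iOrderClosure_adj_of_lt G huv).2 ⟨x, hvw.le.trans hwx, hux⟩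

theorem revIOrderClosure_revIOrder (u v w : V) (hwv : w < v) (hvu : v < u)
    (h : (revIOrderClosure G).Adj u w) : (revIOrderClosure G).Adj u v := by
  obtain ⟨t, htw, htu⟩ := (revIOrderClosure_adj_of_lt G (hwv.trans hvu)).1 h.symm
  exact ((revIOrderClosure_adj_of_lt G hvu).2 ⟨t, htw.trans hwv.le, htu⟩).symm

theorem iOrderClosure_inf_revIOrderClosure_le
    (hG : ∀ u v w x : V, u < v → v < w → w < x → G.Adj u w → G.Adj v x → G.Adj v w) :
    iOrderClosure G ⊓ revIOrderClosure G ≤ G := by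
  refine le_of_forall_lt_adj fun u v huv ⟨h₁, h₂⟩ => ?_
  obtain ⟨w, hvw, huw⟩ := (iOrderClosure_adj_of_lt G huv).1 h₁
  obtain ⟨t, htu, htv⟩ := (revIOrderClosure_adj_of_lt G huv).1 h₂
  rcases hvw.eq_or_lt with rfl | hvw
  · exact huw
  rcases htu.eq_or_lt with rfl | htu
  · exact htv
  exact hG t u v w htu huv hvw htv huw

end SimpleGraph

/-- A linear order is an MPT-order of `G` iff `G` is the intersection of two graphs,
one for which the order is an I-order and one for which the reverse order is an I-order. -/
theorem mptOrder_iff_two_iOrders {V : Type*} [LinearOrder V] (G : SimpleGraph V) :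
    (∀ u v w x : V, u < v → v < w → w < x → G.Adj u w → G.Adj v x → G.Adj v w) ↔
    ∃ H₁ H₂ : SimpleGraph V, G = H₁ ⊓ H₂ ∧
      (∀ u v w : V, u < v → v < w → H₁.Adj u w → H₁.Adj u v) ∧
      (∀ u v w : V, w < v → v < u → H₂.Adj u w → H₂.Adj u v) := by
  constructor
  · intro hG
    refine ⟨G.iOrderClosure, G.revIOrderClosure, ?_, G.iOrderClosure_iOrder,
      G.revIOrderClosure_revIOrder⟩
    exact le_antisymm (le_inf G.le_iOrderClosure G.le_revIOrderClosure)
      (G.iOrderClosure_inf_revIOrderClosure_le hG)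
  · rintro ⟨H₁, H₂, rfl, hH₁, hH₂⟩ u v w x huv hvw hwx ⟨-, huw⟩ ⟨hvx, -⟩
    exact ⟨hH₁ v w x hvw hwx hvx, (hH₂ w v u huv hvw huw.symm).symm⟩
end

section
/- If G is an MPT graph and u, v are non-adjacent vertices of G, then the subgraph of G induced by the common neighborhood N(u) ∩ N(v) is an interval graph. -/
open SimpleGraph Set

/-! Since `u` and `v` are non-adjacent, one of the points, say `p u`, lies outside `I_v`, say to
its left. Every common neighbour `w` has `p u ∈ I_w` and `p w ∈ I_v`, so all left endpoints of
the common neighbourhood lie to the left of all its points. For two such vertices the MPT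
condition then reduces to the intersection of the half-intervals `[p w, e w]`. The other cases
are mirror images. -/

namespace IsMPTRep

variable {V : Type*} {G : SimpleGraph V} {s p e : V → ℝ}

lemma neg (h : IsMPTRep G s p e) : IsMPTRep G (-e) (-p) (-s) := by
  refine ⟨fun v => ?_, fun u v huv => ?_⟩
  · simpa [and_comm] using h.1 v
  · rw [h.2 u v huv]
    simp only [Pi.neg_apply, mem_Icc, neg_le_neg_iff]
    tauto

lemma adj_iff (h : IsMPTRep G s p e) {u v : V} (huv : u ≠ v) :
    G.Adj u v ↔ p u ∈ Icc (s v) (e v) ∧ p v ∈ Icc (s u) (e u) :=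
  h.2 u v huv

/-- Witnessed by the intervals `[s w, p w]`. -/
lemma isIntervalGraph_induce_of_point_le_right (h : IsMPTRep G s p e) {S : Set V}
    (hS : ∀ w ∈ S, ∀ x ∈ S, p w ≤ e x) : IsIntervalGraph (G.induce S) := by
  refine ⟨fun w => s w, fun w => p w, fun w => (h.1 w).1, fun w x hwx => ?_⟩
  have hs := h.1
  have hpe := hS w w.2 x x.2
  have hpe' := hS x x.2 w w.2
  rw [induce_adj, h.adj_iff (Subtype.coe_ne_coe.mpr hwx), Icc_inter_Icc, nonempty_Icc]
  simp only [mem_Icc, sup_le_iff, le_inf_iff]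
  grind

lemma isIntervalGraph_induce_of_left_le_point (h : IsMPTRep G s p e) {S : Set V}
    (hS : ∀ w ∈ S, ∀ x ∈ S, s w ≤ p x) : IsIntervalGraph (G.induce S) :=
  h.neg.isIntervalGraph_induce_of_point_le_right fun w hw x hx => neg_le_neg (hS x hx w hw)

lemma isIntervalGraph_induce_commonNeighborhood (h : IsMPTRep G s p e) {u v : V}
    (hpu : p u ∉ Icc (s v) (e v)) :
    IsIntervalGraph (G.induce (G.neighborSet u ∩ G.neighborSet v)) := by
  have hu {w} (hw : G.Adj u w) := (h.adj_iff hw.ne).1 hw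
  have hv {w} (hw : G.Adj v w) := (h.adj_iff hw.ne).1 hw
  rcases not_and_or.1 hpu with hlt | hlt <;> rw [not_le] at hlt
  · exact h.isIntervalGraph_induce_of_left_le_point fun w hw x hx =>
      ((hu hw.1).1.1.trans hlt.le).trans (hv hx.2).2.1
  · exact h.isIntervalGraph_induce_of_point_le_right fun w hw x hx =>
      ((hv hw.2).2.2.trans hlt.le).trans (hu hx.1).1.2

end IsMPTRep

/-- In an MPT graph, the common neighborhood of two non-adjacent vertices
induces an interval graph. -/
theorem commonNeighborhood_interval {V : Type*} (G : SimpleGraph V)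
    (hG : IsMPT G) (u v : V) (huv : u ≠ v) (hna : ¬ G.Adj u v) :
    IsIntervalGraph (G.induce (G.neighborSet u ∩ G.neighborSet v)) := by
  obtain ⟨s, p, e, h⟩ := hG
  rw [h.adj_iff huv, not_and_or] at hna
  rcases hna with hpu | hpv
  · exact h.isIntervalGraph_induce_commonNeighborhood hpu
  · rw [inter_comm]
    exact h.isIntervalGraph_induce_commonNeighborhood hpv
end

section
/- The complete tripartite graph K_{2,2,2} (the octahedron) is not a max point-tolerance graph. -/
open SimpleGraph Set

/-- The complete tripartite graph `K_{2,2,2}` (octahedron): vertices are pairs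
`(part, index)` and two vertices are adjacent iff they lie in different parts. -/
def K222 : SimpleGraph (Fin 3 × Fin 2) where
  Adj u v := u.1 ≠ v.1
  symm := ⟨fun u v h => h.symm⟩
  loopless := ⟨fun u h => h rfl⟩

/-!
Two non-adjacent vertices `u`, `v` of an MPT graph cannot both have their points in the other's
interval, say `p u ∉ [s v, e v]`. If every other vertex is adjacent to `v`, all points other than
`p u` lie in `[s v, e v]`, so `p u` is a strict global maximum or minimum of `p`. In `K_{2,2,2}`
each of the three parts is such a pair, which would give three distinct strict extrema of one
real function.
-/

section StrictExtremum

variable {V α : Type*} [Preorder α]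

def IsStrictExtremum (f : V → α) (x : V) : Prop :=
  (∀ w, w ≠ x → f w < f x) ∨ (∀ w, w ≠ x → f x < f w)

lemma eq_of_forall_lt_of_forall_lt {f : V → α} {x y : V}
    (hx : ∀ w, w ≠ x → f w < f x) (hy : ∀ w, w ≠ y → f w < f y) : x = y :=
  by_contra fun hxy => lt_asymm (hx y (Ne.symm hxy)) (hy x hxy)

lemma eq_of_forall_gt_of_forall_gt {f : V → α} {x y : V}
    (hx : ∀ w, w ≠ x → f x < f w) (hy : ∀ w, w ≠ y → f y < f w) : x = y :=
  eq_of_forall_lt_of_forall_lt (f := fun v => OrderDual.toDual (f v)) hx hy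

lemma IsStrictExtremum.eq_or_eq_or_eq {f : V → α} {x y z : V} (hx : IsStrictExtremum f x)
    (hy : IsStrictExtremum f y) (hz : IsStrictExtremum f z) : x = y ∨ x = z ∨ y = z := by
  rcases hx with hx | hx <;> rcases hy with hy | hy <;> rcases hz with hz | hz <;>
  first
    | exact Or.inl (eq_of_forall_lt_of_forall_lt hx hy)
    | exact Or.inl (eq_of_forall_gt_of_forall_gt hx hy)
    | exact Or.inr (Or.inl (eq_of_forall_lt_of_forall_lt hx hz))
    | exact Or.inr (Or.inl (eq_of_forall_gt_of_forall_gt hx hz))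
    | exact Or.inr (Or.inr (eq_of_forall_lt_of_forall_lt hy hz))
    | exact Or.inr (Or.inr (eq_of_forall_gt_of_forall_gt hy hz))

end StrictExtremum

namespace IsMPTRep

variable {V : Type*} {G : SimpleGraph V} {s p e : V → ℝ} {u v : V}

lemma mem_Icc_of_adj (h : IsMPTRep G s p e) (huv : G.Adj u v) : p u ∈ Icc (s v) (e v) :=
  ((h.2 u v huv.ne).1 huv).1

lemma notMem_Icc_or_notMem_Icc (h : IsMPTRep G s p e) (huv : u ≠ v) (hn : ¬G.Adj u v) :
    p u ∉ Icc (s v) (e v) ∨ p v ∉ Icc (s u) (e u) :=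
  not_and_or.mp ((h.2 u v huv).not.mp hn)

lemma isStrictExtremum_of_notMem_Icc (h : IsMPTRep G s p e) (hout : p u ∉ Icc (s v) (e v))
    (hv : ∀ w, w ≠ u → w ≠ v → G.Adj w v) : IsStrictExtremum p u := by
  have hin : ∀ w, w ≠ u → p w ∈ Icc (s v) (e v) := by
    intro w hwu
    by_cases hwv : w = v
    · exact hwv ▸ h.1 v
    · exact h.mem_Icc_of_adj (hv w hwu hwv)
  rw [mem_Icc, not_and_or, not_le, not_le] at hout
  rcases hout with hlt | hgt
  · exact Or.inr fun w hw => hlt.trans_le (hin w hw).1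
  · exact Or.inl fun w hw => (hin w hw).2.trans_lt hgt

lemma isStrictExtremum_or_isStrictExtremum (h : IsMPTRep G s p e) (huv : u ≠ v)
    (hn : ¬G.Adj u v) (hdom : ∀ w, w ≠ u → w ≠ v → G.Adj w u ∧ G.Adj w v) :
    IsStrictExtremum p u ∨ IsStrictExtremum p v :=
  (h.notMem_Icc_or_notMem_Icc huv hn).imp
    (fun hout => h.isStrictExtremum_of_notMem_Icc hout fun w hwu hwv => (hdom w hwu hwv).2)
    (fun hout => h.isStrictExtremum_of_notMem_Icc hout fun w hwv hwu => (hdom w hwu hwv).1)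

end IsMPTRep

lemma K222_adj_of_ne_of_ne (i : Fin 3) (w : Fin 3 × Fin 2) (h0 : w ≠ (i, 0)) (h1 : w ≠ (i, 1)) :
    K222.Adj w (i, 0) ∧ K222.Adj w (i, 1) := by
  obtain ⟨k, j⟩ := w
  have hki : k ≠ i := by
    rintro rfl
    fin_cases j <;> simp_all
  exact ⟨hki, hki⟩

/-- `K_{2,2,2}` is not a max point-tolerance graph. -/
theorem K222_not_MPT : ¬ IsMPT K222 := by
  rintro ⟨s, p, e, h⟩
  have hext : ∀ i : Fin 3, ∃ j : Fin 2, IsStrictExtremum p (i, j) := fun i =>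
    (h.isStrictExtremum_or_isStrictExtremum (u := (i, 0)) (v := (i, 1)) (by simp)
      (by simp [K222]) (K222_adj_of_ne_of_ne i)).elim (⟨0, ·⟩) (⟨1, ·⟩)
  choose j hj using hext
  rcases (hj 0).eq_or_eq_or_eq (hj 1) (hj 2) with h | h | h <;> simp at h
end

section
/- For every max point-tolerance graph G, the clique cover number γ(G) is at most twice the independence number α(G). -/
/-! Let `u` be the vertex whose interval ends first and `K` the vertices whose points lie at or
left of `e u`; every interval of `K` contains `e u`. Cover `K` greedily: pick the remaining vertex
`x` with the leftmost point and take as a clique the remaining vertices of `K` starting at or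
before `p x` (their intervals all contain `[p x, e u]`). The picks have pairwise disjoint spans
`[s, p]`, hence are independent. Recurse on the vertices right of `e u`. The vertices `u` of all
rounds are independent, and so are the picks other than the first of each round, since those
start right of a point that lies right of every earlier round. One clique per pick gives
`γ ≤ 2α`. -/

open SimpleGraph Set

/-- The clique cover number: the least `k` such that the vertices can be
partitioned into `k` cliques. -/
noncomputable def cliqueCoverNum {V : Type*} [Fintype V] (G : SimpleGraph V) : ℕ :=
  sInf {k | ∃ f : V → Fin k, ∀ u v : V, f u = f v → u = v ∨ G.Adj u v}

/-- The independence number: the largest size of an independent set. -/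
noncomputable def indepNum {V : Type*} [Fintype V] (G : SimpleGraph V) : ℕ :=
  sSup {k | ∃ s : Finset V, s.card = k ∧ ∀ u ∈ s, ∀ v ∈ s, u ≠ v → ¬ G.Adj u v}

namespace SimpleGraph

variable {V : Type*} {G : SimpleGraph V}

variable (G) in
def CliqueCoverable (A : Finset V) (k : ℕ) : Prop :=
  ∃ f : V → ℕ, (∀ v ∈ A, f v < k) ∧ ∀ u ∈ A, ∀ v ∈ A, f u = f v → u = v ∨ G.Adj u v

theorem cliqueCoverable_empty : G.CliqueCoverable ∅ 0 :=
  ⟨0, by simp, by simp⟩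

theorem IsClique.cliqueCoverable {C : Finset V} (hC : G.IsClique (C : Set V)) :
    G.CliqueCoverable C 1 :=
  ⟨0, by simp, fun _ hu _ hv _ => (eq_or_ne _ _).imp_right (hC hu hv)⟩

theorem CliqueCoverable.union [DecidableEq V] {A B : Finset V} {a b : ℕ}
    (hA : G.CliqueCoverable A a) (hB : G.CliqueCoverable B b) :
    G.CliqueCoverable (A ∪ B) (a + b) := by
  obtain ⟨f, hfA, hf⟩ := hA
  obtain ⟨g, hgB, hg⟩ := hB
  refine ⟨fun v => if v ∈ A then f v else a + g v, fun v hv => ?_, fun u hu v hv huv => ?_⟩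
  · by_cases hvA : v ∈ A
    · simp only [hvA, if_true]; have := hfA v hvA; omega
    · have := hgB v ((Finset.mem_union.1 hv).resolve_left hvA); simp only [hvA, if_false]; omega
  · by_cases huA : u ∈ A <;> by_cases hvA : v ∈ A <;>
      simp only [huA, hvA, if_true, if_false] at huv
    · exact hf u huA v hvA huv
    · have := hfA u huA; omega
    · have := hfA v hvA; omega
    · exact hg u ((Finset.mem_union.1 hu).resolve_left huA) v
        ((Finset.mem_union.1 hv).resolve_left hvA) (by omega)

theorem CliqueCoverable.pos {A : Finset V} {k : ℕ} (h : G.CliqueCoverable A k)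
    (hA : A.Nonempty) : 0 < k :=
  let ⟨_, hf, _⟩ := h
  let ⟨v, hv⟩ := hA
  (Nat.zero_le _).trans_lt (hf v hv)

theorem CliqueCoverable.cliqueCoverNum_le [Fintype V] {k : ℕ}
    (h : G.CliqueCoverable Finset.univ k) : cliqueCoverNum G ≤ k := by
  obtain ⟨f, hfk, hf⟩ := h
  refine Nat.sInf_le ⟨fun v => ⟨f v, hfk v (Finset.mem_univ v)⟩, fun u v huv => ?_⟩
  exact hf u (Finset.mem_univ u) v (Finset.mem_univ v) (congrArg Fin.val huv)

end SimpleGraph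

theorem card_le_indepNum_of_isIndepSet {V : Type*} [Fintype V] {G : SimpleGraph V}
    {S : Finset V} (hS : G.IsIndepSet S) : S.card ≤ _root_.indepNum G := by
  refine le_csSup ⟨Fintype.card V, ?_⟩ ⟨S, rfl, fun u hu v hv => hS hu hv⟩
  rintro k ⟨T, rfl, -⟩
  exact T.card_le_univ

namespace IsMPTRep

variable {V : Type*} {G : SimpleGraph V} {s p e : V → ℝ}

theorem not_adj_of_point_lt_start (h : IsMPTRep G s p e) {x y : V} (hxy : p x < s y) :
    ¬ G.Adj x y :=
  fun hadj => hxy.not_ge ((h.2 x y hadj.ne).1 hadj).1.1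

theorem not_adj_of_end_lt_point (h : IsMPTRep G s p e) {x y : V} (hxy : e x < p y) :
    ¬ G.Adj x y :=
  fun hadj => hxy.not_ge ((h.2 x y hadj.ne).1 hadj).2.2

theorem isIndepSet_of_pairwise (h : IsMPTRep G s p e) {T : Set V}
    (hT : T.Pairwise fun x y => p x < s y ∨ p y < s x) : G.IsIndepSet T :=
  hT.mono' fun _ _ hxy => hxy.elim h.not_adj_of_point_lt_start
    fun hyx hadj => h.not_adj_of_point_lt_start hyx hadj.symm

theorem isIndepSet_union (h : IsMPTRep G s p e) {S T : Set V} (hS : G.IsIndepSet S)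
    (hT : G.IsIndepSet T) (hST : ∀ x ∈ S, ∀ y ∈ T, p x < s y) : G.IsIndepSet (S ∪ T) :=
  Set.pairwise_union.2 ⟨hS, hT, fun x hx y hy _ =>
    ⟨h.not_adj_of_point_lt_start (hST x hx y hy),
      fun hadj => h.not_adj_of_point_lt_start (hST x hx y hy) hadj.symm⟩⟩

theorem isIndepSet_insert (h : IsMPTRep G s p e) {u : V} {U : Set V} (hU : G.IsIndepSet U)
    (huU : ∀ y ∈ U, e u < p y) : G.IsIndepSet (insert u U) :=
  hU.insert fun y hy _ => ⟨h.not_adj_of_end_lt_point (huU y hy),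
    fun hadj => h.not_adj_of_end_lt_point (huU y hy) hadj.symm⟩

theorem isClique_of_forall_mem_Icc (h : IsMPTRep G s p e) {C : Set V} {r q : ℝ}
    (hC : ∀ v ∈ C, s v ≤ r ∧ p v ∈ Icc r q ∧ q ≤ e v) : G.IsClique C := by
  intro u hu v hv huv
  obtain ⟨hsu, ⟨hru, hqu⟩, hue⟩ := hC u hu
  obtain ⟨hsv, ⟨hrv, hqv⟩, hve⟩ := hC v hv
  exact (h.2 u v huv).2 ⟨⟨hsv.trans hru, hqu.trans hve⟩, ⟨hsu.trans hrv, hqv.trans hue⟩⟩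

theorem exists_pairwise_separated_cover [DecidableEq V] (h : IsMPTRep G s p e) (q : ℝ)
    (K : Finset V) (hK : ∀ v ∈ K, p v ≤ q ∧ q ≤ e v) :
    ∃ T ⊆ K, G.CliqueCoverable K T.card ∧
      (T : Set V).Pairwise fun x y => p x < s y ∨ p y < s x := by
  induction K using Finset.strongInduction with
  | H K ih =>
  rcases K.eq_empty_or_nonempty with rfl | hKne
  · exact ⟨∅, subset_rfl, cliqueCoverable_empty, by simp⟩
  obtain ⟨x, hxK, hx⟩ := K.exists_min_image p hKne
  set C := K.filter (s · ≤ p x)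
  have hxC : x ∈ C := Finset.mem_filter.2 ⟨hxK, (h.1 x).1⟩
  have hC : G.IsClique (C : Set V) := h.isClique_of_forall_mem_Icc fun v hv => by
    obtain ⟨hvK, hsv⟩ := Finset.mem_filter.1 hv
    exact ⟨hsv, ⟨hx v hvK, (hK v hvK).1⟩, (hK v hvK).2⟩
  have hrest : ∀ v ∈ K \ C, p x < s v := fun v hv => by
    simp only [C, Finset.mem_sdiff, Finset.mem_filter, not_and, not_le] at hv
    exact hv.2 hv.1
  obtain ⟨T, hTK, hT, hTsep⟩ :=
    ih (K \ C) (Finset.sdiff_ssubset (Finset.filter_subset _ _) ⟨x, hxC⟩)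
      fun v hv => hK v (Finset.sdiff_subset hv)
  have hxT : x ∉ T := fun hxT => (hrest x (hTK hxT)).not_ge (h.1 x).1
  refine ⟨insert x T, Finset.insert_subset hxK (hTK.trans Finset.sdiff_subset), ?_, ?_⟩
  · rw [Finset.card_insert_of_notMem hxT, add_comm,
      ← Finset.union_sdiff_of_subset (Finset.filter_subset (s · ≤ p x) K)]
    exact hC.cliqueCoverable.union hT
  · rw [Finset.coe_insert]
    exact hTsep.insert fun y hy _ => ⟨.inl (hrest y (hTK hy)), .inr (hrest y (hTK hy))⟩

theorem exists_forall_point_lt_start_of_pairwise (h : IsMPTRep G s p e) {T : Finset V}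
    (hT : (T : Set V).Pairwise fun x y => p x < s y ∨ p y < s x) (hne : T.Nonempty) :
    ∃ x ∈ T, ∀ y ∈ T, y ≠ x → p x < s y := by
  obtain ⟨x, hxT, hx⟩ := T.exists_min_image p hne
  exact ⟨x, hxT, fun y hyT hyx => (hT hxT hyT hyx.symm).resolve_right fun hyx' =>
    hyx'.not_ge ((h.1 x).1.trans (hx y hyT))⟩

theorem exists_cliqueCoverable_le_card_add_card [DecidableEq V] (h : IsMPTRep G s p e)
    (A : Finset V) :
    ∃ (k : ℕ) (S U : Finset V), G.CliqueCoverable A k ∧ k ≤ S.card + U.card ∧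
      G.IsIndepSet (S : Set V) ∧ G.IsIndepSet (U : Set V) ∧ S ⊆ A ∧ U ⊆ A ∧
      ∀ y ∈ S, ∃ z ∈ A, p z < s y := by
  induction A using Finset.strongInduction with
  | H A ih =>
  rcases A.eq_empty_or_nonempty with rfl | hAne
  · exact ⟨0, ∅, ∅, cliqueCoverable_empty, le_rfl, by simp, by simp, subset_rfl, subset_rfl,
      by simp⟩
  obtain ⟨u, huA, hu⟩ := A.exists_min_image e hAne
  set K := A.filter (p · ≤ e u)
  have huK : u ∈ K := Finset.mem_filter.2 ⟨huA, (h.1 u).2⟩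
  have hrest : ∀ v ∈ A \ K, e u < p v := fun v hv => by
    simp only [K, Finset.mem_sdiff, Finset.mem_filter, not_and, not_le] at hv
    exact hv.2 hv.1
  obtain ⟨T, hTK, hT, hTsep⟩ := h.exists_pairwise_separated_cover (e u) K fun v hv =>
    ⟨(Finset.mem_filter.1 hv).2, hu v (Finset.filter_subset _ _ hv)⟩
  obtain ⟨x, hxT, hx⟩ :=
    h.exists_forall_point_lt_start_of_pairwise hTsep (Finset.card_pos.1 (hT.pos ⟨u, huK⟩))
  obtain ⟨k, S, U, hk, hkSU, hS, hU, hSA, hUA, hSs⟩ :=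
    ih (A \ K) (Finset.sdiff_ssubset (Finset.filter_subset _ _) ⟨u, huK⟩)
  have hTA : T ⊆ A := hTK.trans (Finset.filter_subset _ _)
  have hTS : ∀ a ∈ T, ∀ b ∈ S, p a < s b := fun a ha b hb => by
    obtain ⟨z, hz, hzb⟩ := hSs b hb
    exact ((Finset.mem_filter.1 (hTK ha)).2.trans_lt (hrest z hz)).trans hzb
  refine ⟨T.card + k, T.erase x ∪ S, insert u U, ?_, ?_, ?_, ?_, ?_, ?_, ?_⟩
  · rw [← Finset.union_sdiff_of_subset (Finset.filter_subset (p · ≤ e u) A)]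
    exact hT.union hk
  · have hdisj : Disjoint (T.erase x) S := Finset.disjoint_left.2 fun a ha haS =>
      (Finset.mem_sdiff.1 (hSA haS)).2 (hTK (Finset.mem_of_mem_erase ha))
    have huU : u ∉ U := fun huU => (Finset.mem_sdiff.1 (hUA huU)).2 huK
    rw [Finset.card_union_of_disjoint hdisj, Finset.card_erase_of_mem hxT,
      Finset.card_insert_of_notMem huU]
    have := Finset.card_pos.2 ⟨x, hxT⟩
    omega
  · rw [Finset.coe_union]
    exact h.isIndepSet_union ((h.isIndepSet_of_pairwise hTsep).mono (Finset.erase_subset x T)) hS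
      fun a ha b hb => hTS a (Finset.mem_of_mem_erase ha) b hb
  · rw [Finset.coe_insert]
    exact h.isIndepSet_insert hU fun y hy => hrest y (hUA hy)
  · exact Finset.union_subset ((Finset.erase_subset x T).trans hTA) (hSA.trans Finset.sdiff_subset)
  · exact Finset.insert_subset huA (hUA.trans Finset.sdiff_subset)
  · intro y hy
    rcases Finset.mem_union.1 hy with hy | hy
    · exact ⟨x, hTA hxT, hx y (Finset.mem_of_mem_erase hy) (Finset.ne_of_mem_erase hy)⟩
    · obtain ⟨z, hz, hzy⟩ := hSs y hy
      exact ⟨z, Finset.sdiff_subset hz, hzy⟩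

end IsMPTRep

/-- For every MPT graph, the clique cover number is at most twice the
independence number. -/
theorem cliqueCoverNum_le_two_mul_indepNum {V : Type*} [Fintype V]
    (G : SimpleGraph V) (hG : IsMPT G) :
    cliqueCoverNum G ≤ 2 * _root_.indepNum G := by
  classical
  obtain ⟨s, p, e, h⟩ := hG
  obtain ⟨k, S, U, hk, hkSU, hS, hU, -⟩ := h.exists_cliqueCoverable_le_card_add_card Finset.univ
  have hSα := card_le_indepNum_of_isIndepSet hS
  have hUα := card_le_indepNum_of_isIndepSet hU
  calc cliqueCoverNum G ≤ k := hk.cliqueCoverNum_le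
    _ ≤ S.card + U.card := hkSU
    _ ≤ 2 * _root_.indepNum G := by omega
end

section
/- Every complete bipartite graph K_{m,n} is a max point-tolerance graph. -/
open SimpleGraph Set

theorem completeBipartiteGraph_isMPTRep {α β : Type*} {f : α → ℝ} {g : β → ℝ}
    (hf : Function.Injective f) (hg : Function.Injective g)
    (hf_mem : ∀ a, f a ∈ Icc 0 1) (hg_mem : ∀ b, g b ∈ Icc (-1) 0) :
    IsMPTRep (completeBipartiteGraph α β)
      (Sum.elim (fun _ => -1) g) (Sum.elim f g) (Sum.elim f fun _ => 1) := by
  have hgf : ∀ a b, g b ≤ f a := fun a b => (hg_mem b).2.trans (hf_mem a).1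
  refine ⟨?_, ?_⟩
  · rintro (a | b)
    · exact ⟨(hf_mem a).1.trans' (by norm_num), le_rfl⟩
    · exact ⟨le_rfl, (hg_mem b).2.trans (by norm_num)⟩
  · rintro (a | b) (a' | b') hne
    · exact iff_of_false (by simp) fun ⟨⟨_, h₁⟩, _, h₂⟩ =>
        hne (congrArg Sum.inl (hf (le_antisymm h₁ h₂)))
    · exact iff_of_true (by simp) ⟨⟨hgf a b', (hf_mem a).2⟩, (hg_mem b').1, hgf a b'⟩
    · exact iff_of_true (by simp) ⟨⟨(hg_mem b).1, hgf a' b⟩, hgf a' b, (hf_mem a').2⟩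
    · exact iff_of_false (by simp) fun ⟨⟨h₁, _⟩, h₂, _⟩ =>
        hne (congrArg Sum.inr (hg (le_antisymm h₂ h₁)))

theorem exists_injective_mem_Icc_zero_one (α : Type*) [Countable α] :
    ∃ f : α → ℝ, Function.Injective f ∧ ∀ a, f a ∈ Icc 0 1 := by
  obtain ⟨k, hk⟩ := Countable.exists_injective_nat α
  refine ⟨fun a => ((k a : ℝ) + 1)⁻¹, ?_, fun a => ⟨by positivity, ?_⟩⟩
  · exact inv_injective.comp <| (add_left_injective 1).comp <| Nat.cast_injective.comp hk
  · exact inv_le_one_of_one_le₀ (by simp)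

theorem completeBipartiteGraph_isMPT (α β : Type*) [Countable α] [Countable β] :
    IsMPT (completeBipartiteGraph α β) := by
  obtain ⟨f, hf, hf_mem⟩ := exists_injective_mem_Icc_zero_one α
  obtain ⟨g, hg, hg_mem⟩ := exists_injective_mem_Icc_zero_one β
  exact ⟨_, _, _, completeBipartiteGraph_isMPTRep hf (neg_injective.comp hg) hf_mem
    fun b => ⟨neg_le_neg (hg_mem b).2, neg_nonpos.2 (hg_mem b).1⟩⟩

/-- Every complete bipartite graph is a max point-tolerance graph. -/
theorem completeBipartite_isMPT (m n : ℕ) :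
    IsMPT (completeBipartiteGraph (Fin m) (Fin n)) :=
  completeBipartiteGraph_isMPT (Fin m) (Fin n)
end

section
/- In any MPT representation of a graph G in which all distinguished points are distinct, ordering the vertices by their distinguished points yields an MPT-order: for vertices u, v, w, x with p_u < p_v < p_w < p_x, if uw and vx are edges, then vw is an edge. -/
open SimpleGraph Set

namespace IsMPTRep

variable {V : Type*} {G : SimpleGraph V} {s p e : V → ℝ}

theorem adj_iff_of_lt (hrep : IsMPTRep G s p e) {u v : V} (huv : p u < p v) :
    G.Adj u v ↔ s v ≤ p u ∧ p v ≤ e u := by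
  have hne : u ≠ v := ne_of_apply_ne p huv.ne
  rw [hrep.2 u v hne, mem_Icc, mem_Icc]
  obtain ⟨hsu, -⟩ := hrep.1 u
  obtain ⟨-, hev⟩ := hrep.1 v
  constructor
  · rintro ⟨⟨hsv, -⟩, -, heu⟩
    exact ⟨hsv, heu⟩
  · rintro ⟨hsv, heu⟩
    exact ⟨⟨hsv, huv.le.trans hev⟩, hsu.trans huv.le, heu⟩

end IsMPTRep

theorem mptRep_order_is_mptOrder_general {V : Type*} (G : SimpleGraph V)
    (s p e : V → ℝ) (hrep : IsMPTRep G s p e) :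
    ∀ u v w x : V, p u < p v → p v < p w → p w < p x →
      G.Adj u w → G.Adj v x → G.Adj v w := by
  intro u v w x huv hvw hwx huw hvx
  obtain ⟨hsw, -⟩ := (hrep.adj_iff_of_lt (huv.trans hvw)).1 huw
  obtain ⟨-, hev⟩ := (hrep.adj_iff_of_lt (hvw.trans hwx)).1 hvx
  exact (hrep.adj_iff_of_lt hvw).2 ⟨hsw.trans huv.le, hwx.le.trans hev⟩

/-- In any MPT representation with distinct distinguished points, ordering the
vertices by their distinguished points yields an MPT-order. -/
theorem mptRep_order_is_mptOrder {V : Type*} (G : SimpleGraph V)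
    (s p e : V → ℝ) (hrep : IsMPTRep G s p e) (hinj : Function.Injective p) :
    ∀ u v w x : V, p u < p v → p v < p w → p w < p x →
      G.Adj u w → G.Adj v x → G.Adj v w :=
  mptRep_order_is_mptOrder_general G s p e hrep
end
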